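/- arXiv:2604.09871 — 6 statements merged into one kernel-verified Lean document; each statement's English description precedes it below -/
import Mathlib

section
/- Let ℓ be a learning function with ℓ̲ = ℓ'(1) and ℓ̄ = ℓ'(0). Then the maximal feasible scale H is globally Lipschitz on the simplex Δ^{K−1} with respect to the ℓ¹-norm: for all π, π' ∈ Δ^{K−1}, |H(π) − H(π')| ≤ (ℓ̄/ℓ̲)·‖π − π'‖₁. -/
open Finset

noncomputable section

/-- The simplex Δ^{K-1}: nonnegative coordinates summing to 1. -/
def simplex (K : ℕ) : Set (Fin K → ℝ) :=
  {π | (∀ k, 0 ≤ π k) ∧ ∑ k, π k = 1}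

/-- ℓ¹-norm on ℝ^K. -/
def l1 {K : ℕ} (a : Fin K → ℝ) : ℝ := ∑ k, |a k|

/-- Coverage operator C(a,b) = ∑ min(a_k, b_k). -/
def Cov {K : ℕ} (a b : Fin K → ℝ) : ℝ := ∑ k, min (a k) (b k)

/-- A learning function ℓ : [0,∞) → [0,∞): continuous, strictly increasing,
strictly concave, ℓ(0)=0, ℓ(1)=1, continuously differentiable on [0,1]
with derivative `deriv`, ℓ'(1) > 0 (finiteness of ℓ'(0) is automatic). -/
structure LearningFunction where
  toFun : ℝ → ℝ
  deriv : ℝ → ℝ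
  continuousOn : ContinuousOn toFun (Set.Ici 0)
  strictMonoOn : StrictMonoOn toFun (Set.Ici 0)
  strictConcaveOn : StrictConcaveOn ℝ (Set.Ici 0) toFun
  nonneg : ∀ s, 0 ≤ s → 0 ≤ toFun s
  map_zero : toFun 0 = 0
  map_one : toFun 1 = 1
  hasDerivAt : ∀ s ∈ Set.Icc (0:ℝ) 1,
    HasDerivWithinAt toFun (deriv s) (Set.Icc (0:ℝ) 1) s
  derivContinuousOn : ContinuousOn deriv (Set.Icc (0:ℝ) 1)
  deriv_one_pos : 0 < deriv 1

/-- Maximal feasible scale H(π) = sup { H ≥ 0 : ∑ ℓ(H π_k) ≤ 1 }. -/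
def Hscale {K : ℕ} (L : LearningFunction) (π : Fin K → ℝ) : ℝ :=
  sSup {H : ℝ | 0 ≤ H ∧ ∑ k, L.toFun (H * π k) ≤ 1}

/-- Relative inefficiency index λ(π) = 1/H(π). -/
def lam {K : ℕ} (L : LearningFunction) (π : Fin K → ℝ) : ℝ :=
  1 / Hscale L π

/-- Γ(z) = ‖z‖₁ λ(z/‖z‖₁) for z ≠ 0, Γ(0) = 0. -/
def Gam {K : ℕ} (L : LearningFunction) (z : Fin K → ℝ) : ℝ :=
  if z = 0 then 0 else l1 z * lam L (fun k => z k / l1 z)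

/-- Fragmentation index D(π) = 1 - ∑ π_k². -/
def Dfrag {K : ℕ} (π : Fin K → ℝ) : ℝ := 1 - ∑ k, (π k) ^ 2

/-- Lipschitz constant L_Γ = ℓ̄ + 2 ℓ̄³/ℓ̲. -/
def LGam (L : LearningFunction) : ℝ := L.deriv 0 + 2 * L.deriv 0 ^ 3 / L.deriv 1


namespace LearningFunction

lemma concaveOn_Icc (L : LearningFunction) : ConcaveOn ℝ (Set.Icc (0:ℝ) 1) L.toFun :=
  L.strictConcaveOn.concaveOn.subset (Set.Icc_subset_Ici_self) (convex_Icc 0 1)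

lemma deriv_anti (L : LearningFunction) {x y : ℝ} (hx : x ∈ Set.Icc (0:ℝ) 1)
    (hy : y ∈ Set.Icc (0:ℝ) 1) (hxy : x ≤ y) : L.deriv y ≤ L.deriv x := by
  rcases eq_or_lt_of_le hxy with rfl | h
  · exact le_rfl
  exact le_trans (L.concaveOn_Icc.le_slope_of_hasDerivWithinAt hx hy h (L.hasDerivAt y hy))
    (L.concaveOn_Icc.slope_le_of_hasDerivWithinAt hx hy h (L.hasDerivAt x hx))

lemma slope_bounds (L : LearningFunction) {a b : ℝ} (ha : a ∈ Set.Icc (0:ℝ) 1)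
    (hb : b ∈ Set.Icc (0:ℝ) 1) (hab : a < b) :
    L.deriv 1 * (b - a) ≤ L.toFun b - L.toFun a ∧
      L.toFun b - L.toFun a ≤ L.deriv 0 * (b - a) := by
  have hba : (0:ℝ) < b - a := by linarith
  have h1 : L.deriv b ≤ slope L.toFun a b :=
    L.concaveOn_Icc.le_slope_of_hasDerivWithinAt ha hb hab (L.hasDerivAt b hb)
  have h2 : slope L.toFun a b ≤ L.deriv a :=
    L.concaveOn_Icc.slope_le_of_hasDerivWithinAt ha hb hab (L.hasDerivAt a ha)
  have h3 : L.deriv a ≤ L.deriv 0 := L.deriv_anti (Set.left_mem_Icc.2 zero_le_one) ha ha.1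
  have h4 : L.deriv 1 ≤ L.deriv b := L.deriv_anti hb (Set.right_mem_Icc.2 zero_le_one) hb.2
  rw [slope_def_field] at h1 h2
  constructor
  · have := (le_div_iff₀ hba).mp (h4.trans h1); linarith
  · have := (div_le_iff₀ hba).mp (h2.trans h3); nlinarith

lemma one_le_deriv_zero (L : LearningFunction) : 1 ≤ L.deriv 0 := by
  have := (L.slope_bounds (Set.left_mem_Icc.2 zero_le_one)
    (Set.right_mem_Icc.2 zero_le_one) zero_lt_one).2
  rw [L.map_zero, L.map_one] at this; linarith

lemma lower_lip (L : LearningFunction) {a b : ℝ} (ha : 0 ≤ a) (hb : b ≤ 1) (hab : a ≤ b) :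
    L.deriv 1 * (b - a) ≤ L.toFun b - L.toFun a := by
  rcases eq_or_lt_of_le hab with rfl | h
  · simp
  · exact (L.slope_bounds ⟨ha, by linarith⟩ ⟨by linarith, hb⟩ h).1

lemma upper_lip (L : LearningFunction) {a b : ℝ} (ha : a ∈ Set.Icc (0:ℝ) 1)
    (hb : b ∈ Set.Icc (0:ℝ) 1) : L.toFun b - L.toFun a ≤ L.deriv 0 * |b - a| := by
  rcases le_or_gt b a with h | h
  · have h1 : L.toFun b ≤ L.toFun a :=
      (L.strictMonoOn.monotoneOn) (Set.mem_Ici.2 hb.1) (Set.mem_Ici.2 ha.1) h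
    have h2 : (0:ℝ) ≤ L.deriv 0 * |b - a| :=
      mul_nonneg (by linarith [L.one_le_deriv_zero]) (abs_nonneg _)
    linarith
  · rw [abs_of_pos (by linarith : (0:ℝ) < b - a)]
    exact (L.slope_bounds ha hb h).2

lemma self_le (L : LearningFunction) {s : ℝ} (hs : s ∈ Set.Icc (0:ℝ) 1) :
    s ≤ L.toFun s := by
  have h := L.concaveOn_Icc.2 (Set.right_mem_Icc.2 zero_le_one)
    (Set.left_mem_Icc.2 zero_le_one) (show (0:ℝ) ≤ s from hs.1)
    (show (0:ℝ) ≤ 1 - s by linarith [hs.2]) (show s + (1 - s) = 1 by ring)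
  simp only [smul_eq_mul, mul_one, mul_zero, L.map_one, L.map_zero, add_zero] at h
  linarith

end LearningFunction

section Feasible

variable {K : ℕ} (L : LearningFunction) {π : Fin K → ℝ}

lemma coord_le_one (hπ : π ∈ simplex K) (k : Fin K) : π k ≤ 1 := by
  have := Finset.single_le_sum (f := π) (fun i _ => hπ.1 i) (mem_univ k)
  rw [hπ.2] at this; exact this

lemma feasible_bounds (hπ : π ∈ simplex K) {H : ℝ} (hH : 0 ≤ H)
    (hsum : ∑ k, L.toFun (H * π k) ≤ 1) :
    (∀ k, H * π k ≤ 1) ∧ H ≤ 1 := by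
  have hterm : ∀ k, L.toFun (H * π k) ≤ 1 := by
    intro k
    have h1 : L.toFun (H * π k) ≤ ∑ j, L.toFun (H * π j) :=
      Finset.single_le_sum (fun j _ => L.nonneg _ (mul_nonneg hH (hπ.1 j))) (mem_univ k)
    linarith
  have hle : ∀ k, H * π k ≤ 1 := by
    intro k
    by_contra hc
    push_neg at hc
    have := L.strictMonoOn (Set.mem_Ici.2 zero_le_one)
      (Set.mem_Ici.2 (by linarith : (0:ℝ) ≤ H * π k)) hc
    rw [L.map_one] at this
    exact absurd (hterm k) (by linarith)
  refine ⟨hle, ?_⟩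
  have h2 : ∀ k, H * π k ≤ L.toFun (H * π k) :=
    fun k => L.self_le ⟨mul_nonneg hH (hπ.1 k), hle k⟩
  have h3 : ∑ k, H * π k ≤ ∑ k, L.toFun (H * π k) := Finset.sum_le_sum fun k _ => h2 k
  rw [← Finset.mul_sum, hπ.2, mul_one] at h3
  linarith

lemma feasible_nonempty (hπ : π ∈ simplex K) :
    (0:ℝ) ∈ {H : ℝ | 0 ≤ H ∧ ∑ k, L.toFun (H * π k) ≤ 1} := by
  refine ⟨le_rfl, ?_⟩
  simp [L.map_zero]

lemma feasible_bddAbove (hπ : π ∈ simplex K) :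
    BddAbove {H : ℝ | 0 ≤ H ∧ ∑ k, L.toFun (H * π k) ≤ 1} :=
  ⟨1, fun H hH => (feasible_bounds L hπ hH.1 hH.2).2⟩

lemma feasible_closed (hπ : π ∈ simplex K) :
    IsClosed {H : ℝ | 0 ≤ H ∧ ∑ k, L.toFun (H * π k) ≤ 1} := by
  have hg : ContinuousOn (fun H : ℝ => ∑ k, L.toFun (H * π k)) (Set.Ici 0) := by
    apply continuousOn_finset_sum
    intro k _
    exact L.continuousOn.comp ((continuous_id.mul continuous_const).continuousOn)
      (fun H hH => mul_nonneg hH (hπ.1 k))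
  have : {H : ℝ | 0 ≤ H ∧ ∑ k, L.toFun (H * π k) ≤ 1}
      = Set.Ici 0 ∩ (fun H : ℝ => ∑ k, L.toFun (H * π k)) ⁻¹' Set.Iic 1 := by
    ext H; simp [Set.mem_Ici, Set.mem_Iic]
  rw [this]
  exact hg.preimage_isClosed_of_isClosed isClosed_Ici isClosed_Iic

lemma Hscale_mem (hπ : π ∈ simplex K) :
    0 ≤ Hscale L π ∧ ∑ k, L.toFun (Hscale L π * π k) ≤ 1 :=
  (feasible_closed L hπ).csSup_mem ⟨0, feasible_nonempty L hπ⟩ (feasible_bddAbove L hπ)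

end Feasible

lemma key_step {K : ℕ} (L : LearningFunction) {π π' : Fin K → ℝ}
    (hπ : π ∈ simplex K) (hπ' : π' ∈ simplex K) :
    Hscale L π - Hscale L π' ≤ (L.deriv 0 / L.deriv 1) * l1 (π - π') := by
  have hd1 : 0 < L.deriv 1 := L.deriv_one_pos
  have hd0 : 1 ≤ L.deriv 0 := L.one_le_deriv_zero
  have hl1 : 0 ≤ l1 (π - π') := Finset.sum_nonneg fun k _ => abs_nonneg _
  set δ := (L.deriv 0 / L.deriv 1) * l1 (π - π') with hδdef
  have hδ : 0 ≤ δ := mul_nonneg (div_nonneg (by linarith) hd1.le) hl1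
  obtain ⟨hH0, hHsum⟩ := Hscale_mem L hπ
  set H := Hscale L π with hHdef
  rcases le_or_gt H δ with hcase | hcase
  · have h' : 0 ≤ Hscale L π' := (Hscale_mem L hπ').1
    linarith
  · have hHle1 : H ≤ 1 := (feasible_bounds L hπ hH0 hHsum).2
    have hHπle : ∀ k, H * π k ≤ 1 := (feasible_bounds L hπ hH0 hHsum).1
    have hH'0 : 0 ≤ H - δ := by linarith
    have hH'le1 : H - δ ≤ 1 := by linarith
    have hmem : H - δ ∈ {x : ℝ | 0 ≤ x ∧ ∑ k, L.toFun (x * π' k) ≤ 1} := by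
      refine ⟨hH'0, ?_⟩
      have hterm : ∀ k, L.toFun ((H - δ) * π' k) ≤
          L.toFun (H * π k) + L.deriv 0 * |π k - π' k| - L.deriv 1 * (δ * π k) := by
        intro k
        have hπk0 := hπ.1 k
        have hπ'k0 := hπ'.1 k
        have hπk1 := coord_le_one hπ k
        have hπ'k1 := coord_le_one hπ' k
        have hm1 : (H - δ) * π' k ∈ Set.Icc (0:ℝ) 1 :=
          ⟨mul_nonneg hH'0 hπ'k0, mul_le_one₀ hH'le1 hπ'k0 hπ'k1⟩
        have hm2 : (H - δ) * π k ∈ Set.Icc (0:ℝ) 1 :=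
          ⟨mul_nonneg hH'0 hπk0, mul_le_one₀ hH'le1 hπk0 hπk1⟩
        have h1 : L.toFun ((H - δ) * π' k) - L.toFun ((H - δ) * π k)
            ≤ L.deriv 0 * ((H - δ) * |π k - π' k|) := by
          have h := L.upper_lip hm2 hm1
          have habs : |(H - δ) * π' k - (H - δ) * π k| = (H - δ) * |π k - π' k| := by
            rw [← mul_sub, abs_mul, abs_of_nonneg hH'0, abs_sub_comm]
          rwa [habs] at h
        have h1' : L.deriv 0 * ((H - δ) * |π k - π' k|) ≤ L.deriv 0 * |π k - π' k| := by
          have hint : 0 ≤ L.deriv 0 * ((1 - (H - δ)) * |π k - π' k|) :=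
            mul_nonneg (by linarith)
              (mul_nonneg (by linarith) (abs_nonneg _))
          nlinarith [hint]
        have h2 : L.deriv 1 * (H * π k - (H - δ) * π k)
            ≤ L.toFun (H * π k) - L.toFun ((H - δ) * π k) :=
          L.lower_lip hm2.1 (hHπle k)
            (mul_le_mul_of_nonneg_right (by linarith) hπk0)
        have heq : H * π k - (H - δ) * π k = δ * π k := by ring
        rw [heq] at h2
        linarith
      calc ∑ k, L.toFun ((H - δ) * π' k)
          ≤ ∑ k, (L.toFun (H * π k) + L.deriv 0 * |π k - π' k| - L.deriv 1 * (δ * π k)) :=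
            Finset.sum_le_sum fun k _ => hterm k
        _ = ∑ k, L.toFun (H * π k) + L.deriv 0 * (∑ k, |π k - π' k|)
            - L.deriv 1 * δ * (∑ k, π k) := by
            rw [Finset.sum_sub_distrib, Finset.sum_add_distrib, Finset.mul_sum,
              Finset.mul_sum]
            ring_nf
        _ ≤ 1 := by
            have hsum_eq : ∑ k, |π k - π' k| = l1 (π - π') := by
              simp [l1]
            have hcancel : L.deriv 1 * δ = L.deriv 0 * l1 (π - π') := by
              rw [hδdef]; field_simp
            rw [hsum_eq, hπ.2]
            linarith
    have h2 : H - δ ≤ Hscale L π' := le_csSup (feasible_bddAbove L hπ') hmem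
    linarith

/-- H is globally Lipschitz on the simplex with constant ℓ̄/ℓ̲ in the ℓ¹-norm. -/
theorem Hscale_lipschitz {K : ℕ} (hK : 1 ≤ K) (L : LearningFunction)
    (π π' : Fin K → ℝ) (hπ : π ∈ simplex K) (hπ' : π' ∈ simplex K) :
    |Hscale L π - Hscale L π'| ≤ (L.deriv 0 / L.deriv 1) * l1 (π - π') := by
  have hsymm : l1 (π' - π) = l1 (π - π') := by
    simp only [l1, Pi.sub_apply]
    exact Finset.sum_congr rfl fun k _ => abs_sub_comm _ _
  rw [abs_sub_le_iff]
  exact ⟨key_step L hπ hπ', hsymm ▸ key_step L hπ' hπ⟩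

end
end

section
/- Let ℓ be a learning function. Then there exists a constant c > 0 such that ℓ(s) ≥ s + c·s·(1 − s) for all s ∈ [0,1]. -/
open Finset

noncomputable section

/-- Strict concavity gives a quadratic lower bound:
there is c > 0 with ℓ(s) ≥ s + c·s·(1-s) on [0,1]. -/
theorem learning_quadratic_lower_bound (L : LearningFunction) :
    ∃ c > (0:ℝ), ∀ s ∈ Set.Icc (0:ℝ) 1, s + c * s * (1 - s) ≤ L.toFun s := by
  have hcc := L.strictConcaveOn.concaveOn
  have hhalf : 1 / 2 < L.toFun (1 / 2) := by
    have h := L.strictConcaveOn.2 (show (0:ℝ) ∈ Set.Ici 0 by simp)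
      (show (1:ℝ) ∈ Set.Ici 0 by simp) (by norm_num)
      (show (0:ℝ) < 1/2 by norm_num) (show (0:ℝ) < 1/2 by norm_num) (by norm_num)
    simp only [smul_eq_mul, L.map_zero, L.map_one] at h
    linarith [h]
  set c : ℝ := 2 * (L.toFun (1/2) - 1/2) with hc
  have hcpos : 0 < c := by simp [hc]; linarith
  refine ⟨c, hcpos, ?_⟩
  rintro s ⟨hs0, hs1⟩
  rcases le_or_gt s (1/2) with hle | hlt
  · -- s = (1-2s)•0 + (2s)•(1/2)
    have h := hcc.2 (show (0:ℝ) ∈ Set.Ici 0 by simp)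
      (show (1/2:ℝ) ∈ Set.Ici 0 by norm_num)
      (show (0:ℝ) ≤ 1 - 2*s by linarith) (show (0:ℝ) ≤ 2*s by linarith) (by ring)
    simp only [smul_eq_mul, L.map_zero] at h
    have h' : L.toFun s ≥ 2 * s * L.toFun (1/2) := by
      have : (1 - 2*s) * 0 + 2*s * (1/2 : ℝ) = s := by ring
      rw [this] at h; linarith
    nlinarith [mul_nonneg hs0 (le_of_lt hcpos)]
  · -- s = (2-2s)•(1/2) + (2s-1)•1
    have h := hcc.2 (show (1/2:ℝ) ∈ Set.Ici 0 by norm_num)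
      (show (1:ℝ) ∈ Set.Ici 0 by norm_num)
      (show (0:ℝ) ≤ 2 - 2*s by linarith) (show (0:ℝ) ≤ 2*s - 1 by linarith) (by ring)
    simp only [smul_eq_mul, L.map_one] at h
    have h' : L.toFun s ≥ (2 - 2*s) * L.toFun (1/2) + (2*s - 1) := by
      have : (2 - 2*s) * (1/2 : ℝ) + (2*s - 1) * 1 = s := by ring
      rw [this] at h; linarith
    nlinarith [mul_nonneg (by linarith : (0:ℝ) ≤ 1 - s) (le_of_lt hcpos)]

end
end

section
/- Let ℓ be a learning function and K ≥ 1, and define the fragmentation index D(π) = 1 − ∑_{k=1}^K π_k² for π in the simplex Δ^{K−1}. Then there exists a constant c > 0 such that λ(π) ≥ 1 + c·D(π) for every π ∈ Δ^{K−1}, where λ(π) = 1/H(π). Consequently the learning-economies index κ_ℓ = inf{ (λ(π) − 1)/D(π) : π ∈ Δ^{K−1}, D(π) > 0 } is strictly positive. -/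
open Finset

noncomputable section

/-- λ(π) ≥ 1 + c·D(π) for some c > 0, hence the learning-economies index
κ_ℓ = inf{(λ(π)-1)/D(π) : D(π) > 0} is strictly positive. -/
theorem learning_economies_index_pos {K : ℕ} (hK : 1 ≤ K) (L : LearningFunction) :
    ∃ c > (0:ℝ),
      (∀ π ∈ simplex K, 1 + c * Dfrag π ≤ lam L π) ∧
      (∀ π ∈ simplex K, 0 < Dfrag π → c ≤ (lam L π - 1) / Dfrag π) := by
  classical
  set f := L.toFun with hf
  have h0m : (0:ℝ) ∈ Set.Ici (0:ℝ) := Set.mem_Ici.mpr le_rfl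
  have h1m : (1:ℝ) ∈ Set.Ici (0:ℝ) := Set.mem_Ici.mpr zero_le_one
  have hhm : (1/2:ℝ) ∈ Set.Ici (0:ℝ) := Set.mem_Ici.mpr (by norm_num)
  have hconc := L.strictConcaveOn.concaveOn
  have hmono := L.strictMonoOn.monotoneOn
  -- ℓ(1/2) > 1/2
  have hhalf : (1:ℝ)/2 < f (1/2) := by
    have := L.strictConcaveOn.2 h0m h1m (by norm_num) (by norm_num : (0:ℝ) < 1/2)
      (by norm_num : (0:ℝ) < 1/2) (by norm_num)
    simp only [smul_eq_mul] at this
    rw [L.map_zero, L.map_one] at this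
    have e : (1/2:ℝ) * 0 + 1/2 * 1 = 1/2 := by norm_num
    calc (1:ℝ)/2 = 1/2 * 0 + 1/2 * 1 := by norm_num
      _ < f (1/2 * 0 + 1/2 * 1) := this
      _ = f (1/2) := by norm_num
  obtain ⟨δ, hδdef⟩ : ∃ δ : ℝ, δ = 2 * f (1/2) - 1 := ⟨_, rfl⟩
  have hδ : 0 < δ := by rw [hδdef]; linarith
  -- key pointwise inequality on [0,1]
  have key : ∀ x : ℝ, 0 ≤ x → x ≤ 1 → x + δ * (x * (1 - x)) ≤ f x := by
    intro x hx0 hx1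
    rcases le_or_gt x (1/2) with hx | hx
    · have hchord := hconc.2 h0m hhm (by linarith : (0:ℝ) ≤ 1 - 2*x)
        (by linarith : (0:ℝ) ≤ 2*x) (by ring)
      simp only [smul_eq_mul] at hchord
      rw [L.map_zero] at hchord
      have e : (1 - 2*x) * 0 + 2*x * (1/2) = x := by ring
      rw [e, ← hf] at hchord
      rw [hδdef]
      nlinarith [hhalf, mul_nonneg (by linarith [hhalf] : (0:ℝ) ≤ 2 * f (1/2) - 1) (sq_nonneg x)]
    · have hchord := hconc.2 hhm h1m (by linarith : (0:ℝ) ≤ 2 - 2*x)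
        (by linarith : (0:ℝ) ≤ 2*x - 1) (by ring)
      simp only [smul_eq_mul] at hchord
      rw [L.map_one] at hchord
      have e : (2 - 2*x) * (1/2) + (2*x - 1) * 1 = x := by ring
      rw [e, ← hf] at hchord
      rw [hδdef]
      nlinarith [hhalf, mul_nonneg (by linarith [hhalf] : (0:ℝ) ≤ 2 * f (1/2) - 1) (sq_nonneg (1 - x))]
  have main : ∀ π ∈ simplex K, 1 + δ * Dfrag π ≤ lam L π := by
    intro π hπ
    obtain ⟨hπ0, hπ1⟩ := hπ
    have hπle1 : ∀ k, π k ≤ 1 := by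
      intro k
      rw [← hπ1]
      exact Finset.single_le_sum (fun i _ => hπ0 i) (Finset.mem_univ k)
    have hsq_nonneg : (0:ℝ) ≤ ∑ k, (π k)^2 :=
      Finset.sum_nonneg (fun k _ => sq_nonneg _)
    have hsq_le : ∑ k, (π k)^2 ≤ 1 := by
      rw [← hπ1]
      exact Finset.sum_le_sum (fun k _ => by nlinarith [hπ0 k, hπle1 k])
    have hD0 : 0 ≤ Dfrag π := by simp only [Dfrag]; linarith
    set S : Set ℝ := {H : ℝ | 0 ≤ H ∧ ∑ k, f (H * π k) ≤ 1} with hS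
    -- every feasible H is ≤ 1
    have hS1 : ∀ H ∈ S, H ≤ 1 := by
      rintro H ⟨hH0, hHle⟩
      by_contra hH1
      push_neg at hH1
      obtain ⟨k₀, hk₀⟩ : ∃ k, 0 < π k := by
        by_contra hall
        push_neg at hall
        have : ∑ k, π k = 0 := Finset.sum_eq_zero (fun k _ => le_antisymm (hall k) (hπ0 k))
        rw [hπ1] at this; norm_num at this
      have h1 : (1:ℝ) ≤ ∑ k, f (π k) := by
        rw [← hπ1]
        refine Finset.sum_le_sum (fun k _ => ?_)
        have := key (π k) (hπ0 k) (hπle1 k)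
        nlinarith [mul_nonneg (hπ0 k) (by linarith [hπle1 k] : (0:ℝ) ≤ 1 - π k)]
      have h2 : ∑ k, f (π k) < ∑ k, f (H * π k) := by
        refine Finset.sum_lt_sum (fun i _ => ?_) ⟨k₀, Finset.mem_univ _, ?_⟩
        · exact hmono (Set.mem_Ici.mpr (hπ0 i))
            (Set.mem_Ici.mpr (mul_nonneg hH0 (hπ0 i)))
            (le_mul_of_one_le_left (hπ0 i) hH1.le)
        · exact L.strictMonoOn (Set.mem_Ici.mpr (hπ0 k₀))
            (Set.mem_Ici.mpr (mul_nonneg hH0 (hπ0 k₀)))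
            (lt_mul_of_one_lt_left hk₀ hH1)
      linarith
    -- every feasible H satisfies H(1+δD) ≤ 1
    have hSb : ∀ H ∈ S, H * (1 + δ * Dfrag π) ≤ 1 := by
      intro H hHS
      obtain ⟨hH0, hHle⟩ := hHS
      have hH1 := hS1 H ⟨hH0, hHle⟩
      have hsum : ∑ k, (H * π k + δ * ((H * π k) * (1 - H * π k))) ≤ ∑ k, f (H * π k) := by
        refine Finset.sum_le_sum (fun k _ => ?_)
        refine key (H * π k) (mul_nonneg hH0 (hπ0 k)) ?_
        calc H * π k ≤ 1 * π k := mul_le_mul_of_nonneg_right hH1 (hπ0 k)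
          _ = π k := one_mul _
          _ ≤ 1 := hπle1 k
      have e1 : ∑ k, (H * π k + δ * ((H * π k) * (1 - H * π k)))
          = (H + δ * H) * (∑ k, π k) - (δ * H^2) * ∑ k, (π k)^2 := by
        rw [Finset.mul_sum, Finset.mul_sum, ← Finset.sum_sub_distrib]
        exact Finset.sum_congr rfl (fun k _ => by ring)
      rw [e1, hπ1, mul_one] at hsum
      have h3 : H + δ * H * Dfrag π ≤ H + δ * H - δ * H ^ 2 * ∑ k, (π k) ^ 2 := by
        simp only [Dfrag]
        nlinarith [mul_nonneg (mul_nonneg hδ.le hH0) hsq_nonneg,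
          mul_nonneg hδ.le (mul_nonneg (mul_nonneg hH0 (by linarith : (0:ℝ) ≤ 1 - H)) hsq_nonneg)]
      nlinarith
    have h0S : (0:ℝ) ∈ S := by
      refine ⟨le_rfl, ?_⟩
      have hz : ∑ k : Fin K, f ((0:ℝ) * π k) = 0 :=
        Finset.sum_eq_zero (fun k _ => by rw [zero_mul, hf, L.map_zero])
      rw [hz]; norm_num
    have hbdd : BddAbove S := ⟨1, fun H hH => hS1 H hH⟩
    have hpos1 : (0:ℝ) < 1 + δ * Dfrag π := by nlinarith
    -- Hscale ≤ 1/(1+δD)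
    have hsup_le : Hscale L π ≤ 1 / (1 + δ * Dfrag π) := by
      refine csSup_le ⟨0, h0S⟩ (fun H hH => ?_)
      rw [le_div_iff₀ hpos1]
      exact hSb H hH
    -- Hscale > 0 : find a small positive feasible H
    have hKpos : (0:ℝ) < (K:ℝ) := by
      have : (0:ℕ) < K := hK
      exact_mod_cast this
    have h1K : (0:ℝ) < 1 / (K:ℝ) := by positivity
    have hc0 : ContinuousWithinAt f (Set.Ici 0) 0 := L.continuousOn 0 h0m
    have htend : Filter.Tendsto f (nhdsWithin 0 (Set.Ici 0)) (nhds 0) := by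
      have := hc0
      rw [ContinuousWithinAt, hf, L.map_zero] at this
      exact this
    have hev : ∀ᶠ x in nhdsWithin 0 (Set.Ici 0), f x < 1 / (K:ℝ) :=
      htend (Iio_mem_nhds h1K)
    have hev' : ∀ᶠ x in nhdsWithin 0 (Set.Ioi 0), f x < 1 / (K:ℝ) :=
      hev.filter_mono (nhdsWithin_mono _ Set.Ioi_subset_Ici_self)
    obtain ⟨h₀, hh₀lt, hh₀mem⟩ := (hev'.and (eventually_mem_nhdsWithin)).exists
    have hh₀pos : 0 < h₀ := hh₀mem
    have hh₀S : h₀ ∈ S := by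
      refine ⟨hh₀pos.le, ?_⟩
      have step : ∀ k : Fin K, f (h₀ * π k) ≤ f h₀ := by
        intro k
        exact hmono (Set.mem_Ici.mpr (mul_nonneg hh₀pos.le (hπ0 k)))
          (Set.mem_Ici.mpr hh₀pos.le)
          (by nlinarith [hπle1 k, hπ0 k])
      calc ∑ k, f (h₀ * π k) ≤ ∑ _k : Fin K, f h₀ :=
            Finset.sum_le_sum (fun k _ => step k)
        _ = (K:ℝ) * f h₀ := by simp [Finset.sum_const, mul_comm]
        _ ≤ (K:ℝ) * (1 / (K:ℝ)) := by
            exact mul_le_mul_of_nonneg_left hh₀lt.le hKpos.le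
        _ = 1 := by field_simp
    have hHpos : 0 < Hscale L π :=
      lt_of_lt_of_le hh₀pos (le_csSup hbdd hh₀S)
    -- conclude
    have : 1 / (1 / (1 + δ * Dfrag π)) ≤ 1 / Hscale L π :=
      one_div_le_one_div_of_le hHpos hsup_le
    rw [one_div_one_div] at this
    simpa [lam] using this
  refine ⟨δ, hδ, main, fun π hπ hD => ?_⟩
  have h1 := main π hπ
  rw [le_div_iff₀ hD]
  nlinarith

end
end

section
/- Let ℓ be a learning function and fix h in the simplex Δ^{K−1}. Let s ∈ ℝ_+^K be a nonzero feasible profile, i.e. ∑_{k=1}^K ℓ(s_k) ≤ 1, and let π = s/‖s‖₁. Then ‖s‖₁ · min{ π_k / h_k : h_k > 0 } ≤ H(h), with equality if and only if s = H(h)·h. -/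
open Finset

noncomputable section

/-!
Put `m = min {π_k / h_k : h_k > 0}` with `π = s / ‖s‖₁`. Then `‖s‖₁ m h ≤ s` coordinatewise, so
by monotonicity of `ℓ` the profile `‖s‖₁ m h` is feasible and `‖s‖₁ m ≤ H(h)`. At the scale
`H(h)` the constraint is active, `∑ ℓ(H(h) h_k) = 1`, by continuity of `ℓ`; so if
`‖s‖₁ m = H(h)` while `s ≠ H(h) h`, then `H(h) h < s` and strict monotonicity of `ℓ` would make
`∑ ℓ(s_k)` exceed `1`.
-/

open Finset

namespace LearningFunction

variable (L : LearningFunction) {K : ℕ}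

theorem sum_map_le_sum_map {x y : Fin K → ℝ} (hx : ∀ k, 0 ≤ x k) (hxy : x ≤ y) :
    ∑ k, L.toFun (x k) ≤ ∑ k, L.toFun (y k) :=
  sum_le_sum fun k _ =>
    L.strictMonoOn.monotoneOn (hx k) ((hx k).trans (hxy k)) (hxy k)

theorem sum_map_lt_sum_map {x y : Fin K → ℝ} (hx : ∀ k, 0 ≤ x k) (hxy : x < y) :
    ∑ k, L.toFun (x k) < ∑ k, L.toFun (y k) := by
  obtain ⟨hle, j, hj⟩ := Pi.lt_def.1 hxy
  exact sum_lt_sum (fun k _ => L.strictMonoOn.monotoneOn (hx k) ((hx k).trans (hle k)) (hle k))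
    ⟨j, mem_univ j, L.strictMonoOn (hx j) ((hx j).trans hj.le) hj⟩

theorem continuousOn_sum_map_mul {π : Fin K → ℝ} (hπ : ∀ k, 0 ≤ π k) :
    ContinuousOn (fun H => ∑ k, L.toFun (H * π k)) (Set.Ici 0) :=
  continuousOn_finsetSum _ fun k _ =>
    L.continuousOn.comp (continuousOn_id.mul continuousOn_const)
      fun _ hH => mul_nonneg hH (hπ k)

theorem Hscale_nonneg (π : Fin K → ℝ) : 0 ≤ Hscale L π :=
  Real.sSup_nonneg fun _ hH => hH.1

variable {L} {π : Fin K → ℝ} {j : Fin K}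

/-- Every feasible scale `H` satisfies `ℓ(H π_j) ≤ 1 = ℓ(1)`, hence `H ≤ 1 / π_j`. -/
theorem bddAbove_feasible_scales (hπ : ∀ k, 0 ≤ π k) (hj : 0 < π j) :
    BddAbove {H : ℝ | 0 ≤ H ∧ ∑ k, L.toFun (H * π k) ≤ 1} := by
  refine ⟨1 / π j, fun H ⟨hH, hfeas⟩ => ?_⟩
  have hterm : L.toFun (H * π j) ≤ L.toFun 1 := by
    rw [L.map_one]
    exact (single_le_sum (fun k _ => L.nonneg _ (mul_nonneg hH (hπ k))) (mem_univ j)).trans hfeas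
  have : H * π j ≤ 1 :=
    (L.strictMonoOn.le_iff_le (mul_nonneg hH hj.le) (Set.mem_Ici.2 zero_le_one)).1 hterm
  rwa [le_div_iff₀ hj]

theorem le_Hscale (hπ : ∀ k, 0 ≤ π k) (hj : 0 < π j) {H : ℝ} (hH : 0 ≤ H)
    (hfeas : ∑ k, L.toFun (H * π k) ≤ 1) : H ≤ Hscale L π :=
  le_csSup (bddAbove_feasible_scales hπ hj) ⟨hH, hfeas⟩

theorem one_le_sum_map_Hscale_mul (hπ : ∀ k, 0 ≤ π k) (hj : 0 < π j) :
    1 ≤ ∑ k, L.toFun (Hscale L π * π k) := by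
  by_contra! hlt
  have hH0 := Hscale_nonneg L π
  have hcont : ContinuousWithinAt (fun H => ∑ k, L.toFun (H * π k))
      (Set.Ioi (Hscale L π)) (Hscale L π) :=
    ((continuousOn_sum_map_mul L hπ).continuousWithinAt hH0).mono
      fun _ hH => hH0.trans (le_of_lt hH)
  obtain ⟨H, hfeas, hgt⟩ :=
    ((hcont.eventually_lt_const hlt).and self_mem_nhdsWithin).exists
  exact (le_Hscale hπ hj (hH0.trans hgt.le) hfeas.le).not_gt hgt

end LearningFunction

section Simplex

variable {K : ℕ} {h : Fin K → ℝ}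

theorem exists_pos_of_mem_simplex (hh : h ∈ simplex K) : ∃ j, 0 < h j := by
  by_contra! hle
  have : ∑ k, h k = 0 := sum_eq_zero fun k _ => le_antisymm (hle k) (hh.1 k)
  exact zero_ne_one (this.symm.trans hh.2)

theorem l1_eq_sum {s : Fin K → ℝ} (hs : ∀ k, 0 ≤ s k) : l1 s = ∑ k, s k :=
  sum_congr rfl fun k _ => abs_of_nonneg (hs k)

theorem l1_pos {s : Fin K → ℝ} (hs0 : s ≠ 0) : 0 < l1 s := by
  obtain ⟨j, hj⟩ := Function.ne_iff.1 hs0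
  exact (abs_pos.2 hj).trans_le
    (single_le_sum (f := fun k => |s k|) (fun k _ => abs_nonneg _) (mem_univ j))

theorem l1_const_mul_of_mem_simplex (hh : h ∈ simplex K) {c : ℝ} (hc : 0 ≤ c) :
    l1 (fun k => c * h k) = c := by
  rw [l1_eq_sum fun k => mul_nonneg hc (hh.1 k), ← mul_sum, hh.2, mul_one]

end Simplex

section MinRatio

variable {ι : Type*} [Finite ι] {h t : ι → ℝ} {i : ι}

theorem iInf_div_mul_le (ht : 0 ≤ t i) (hh : 0 ≤ h i) :
    (⨅ k : {j // 0 < h j}, t k / h k) * h i ≤ t i := by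
  rcases hh.eq_or_lt with h0 | hpos
  · rwa [← h0, mul_zero]
  · have hbdd : BddBelow (Set.range fun k : {j // 0 < h j} => t k / h k) :=
      (Set.finite_range _).bddBelow
    calc (⨅ k : {j // 0 < h j}, t k / h k) * h i ≤ t i / h i * h i :=
          mul_le_mul_of_nonneg_right (ciInf_le hbdd ⟨i, hpos⟩) hpos.le
      _ = t i := div_mul_cancel₀ _ hpos.ne'

end MinRatio

/-- Upper bound on integrator contribution: ‖s‖₁ · min_{k : h_k > 0} (π_k/h_k) ≤ H(h),
with equality iff s = H(h)·h. -/
theorem integrator_contribution_bound {K : ℕ} (L : LearningFunction)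
    (h : Fin K → ℝ) (hh : h ∈ simplex K)
    (s : Fin K → ℝ) (hs : ∀ k, 0 ≤ s k) (hs0 : s ≠ 0)
    (hfeas : ∑ k, L.toFun (s k) ≤ 1) :
    l1 s * (⨅ k : {j : Fin K // 0 < h j}, (s k.1 / l1 s) / h k.1) ≤ Hscale L h ∧
    (l1 s * (⨅ k : {j : Fin K // 0 < h j}, (s k.1 / l1 s) / h k.1) = Hscale L h ↔
      s = fun k => Hscale L h * h k) := by
  obtain ⟨j, hj⟩ := exists_pos_of_mem_simplex hh
  have : Nonempty {j : Fin K // 0 < h j} := ⟨⟨j, hj⟩⟩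
  have hN := l1_pos hs0
  set m := ⨅ k : {j : Fin K // 0 < h j}, (s k.1 / l1 s) / h k.1
  have hm : 0 ≤ m := Real.iInf_nonneg fun k => div_nonneg (div_nonneg (hs k) hN.le) k.2.le
  have hnonneg : ∀ k, 0 ≤ l1 s * m * h k := fun k => mul_nonneg (mul_nonneg hN.le hm) (hh.1 k)
  have hbelow : ∀ k, l1 s * m * h k ≤ s k := fun k => by
    have := mul_le_mul_of_nonneg_left
      (iInf_div_mul_le (t := fun k => s k / l1 s) (div_nonneg (hs k) hN.le) (hh.1 k)) hN.le
    rwa [mul_div_cancel₀ _ hN.ne', ← mul_assoc] at this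
  refine ⟨LearningFunction.le_Hscale hh.1 hj (mul_nonneg hN.le hm)
    ((L.sum_map_le_sum_map hnonneg hbelow).trans hfeas), fun heq => ?_, fun hseq => ?_⟩
  · by_contra hne
    have hlt : (fun k => Hscale L h * h k) < s := lt_of_le_of_ne (heq ▸ hbelow) (Ne.symm hne)
    exact ((L.sum_map_lt_sum_map (heq ▸ hnonneg) hlt).trans_le hfeas).not_ge
      (LearningFunction.one_le_sum_map_Hscale_mul hh.1 hj)
  · have hl1 : l1 s = Hscale L h := hseq ▸ l1_const_mul_of_mem_simplex hh (L.Hscale_nonneg h)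
    have hterm : ∀ k : {j : Fin K // 0 < h j}, (s k.1 / l1 s) / h k.1 = 1 := fun k => by
      rw [hl1, hseq, mul_div_cancel_left₀ _ (hl1 ▸ hN.ne'), div_self k.2.ne']
    rw [show m = 1 from (iInf_congr hterm).trans ciInf_const, mul_one, hl1]

end
end

section
/- Let ℓ be a learning function with ℓ̲ = ℓ'(1) and ℓ̄ = ℓ'(0), let L_Γ = ℓ̄ + 2ℓ̄³/ℓ̲, and let Γ(z) = ‖z‖₁·λ(z/‖z‖₁) for nonzero z ∈ ℝ_+^K with Γ(0) = 0. Then the map x ↦ Γ(x⊙(1−x)) (where ⊙ is the componentwise product and x⊙(1−x) has coordinates x_k(1−x_k)) is Lipschitz on the simplex Δ^{K−1} with constant L_Γ in the ℓ¹-norm: |Γ(x⊙(1−x)) − Γ(y⊙(1−y))| ≤ L_Γ·‖x − y‖₁ for all x, y ∈ Δ^{K−1}. Consequently, for any q ∈ Δ^{K−1}, |Γ(x⊙(1−x)) − Γ(q⊙(1−q))| ≤ 2 L_Γ·(1 − C(x,q)). -/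
open Finset

noncomputable section

namespace GamLipAux

open Filter Topology Set

variable (L : LearningFunction)


lemma ub_slope0 {b : ℝ} (hb0 : 0 < b) (hb1 : b ≤ 1) :
    (L.toFun b - L.toFun 0) / (b - 0) ≤ L.deriv 0 := by
  have hd := (hasDerivWithinAt_iff_tendsto_slope).1
    (L.hasDerivAt 0 ⟨le_refl 0, zero_le_one⟩)
  have hsub : Set.Ioo (0:ℝ) 1 ⊆ Set.Icc (0:ℝ) 1 \ {0} := fun t ht =>
    ⟨⟨ht.1.le, ht.2.le⟩, ne_of_gt ht.1⟩
  have hne : (𝓝[Set.Icc (0:ℝ) 1 \ {0}] (0:ℝ)).NeBot := by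
    have h1 : (𝓝[Set.Ioo (0:ℝ) 1] (0:ℝ)).NeBot := by
      rw [← mem_closure_iff_nhdsWithin_neBot, closure_Ioo one_ne_zero.symm]
      exact ⟨le_refl 0, zero_le_one⟩
    exact h1.mono (nhdsWithin_mono 0 hsub)
  refine ge_of_tendsto hd ?_
  filter_upwards [self_mem_nhdsWithin,
    nhdsWithin_le_nhds (eventually_lt_nhds hb0)] with t ht htb
  rcases ht with ⟨⟨ht0, ht1⟩, htne⟩
  have := L.strictConcaveOn.secant_strict_mono (a := (0:ℝ)) (x := t) (y := b)
    Set.self_mem_Ici (Set.mem_Ici.2 ht0) (Set.mem_Ici.2 hb0.le)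
    htne (ne_of_gt hb0) htb
  simpa [slope_def_field] using this.le

lemma lb_slope1 {a : ℝ} (ha0 : 0 ≤ a) (ha1 : a < 1) :
    L.deriv 1 ≤ (L.toFun 1 - L.toFun a) / (1 - a) := by
  have hd := (hasDerivWithinAt_iff_tendsto_slope).1
    (L.hasDerivAt 1 ⟨zero_le_one, le_refl 1⟩)
  have hsub : Set.Ioo (0:ℝ) 1 ⊆ Set.Icc (0:ℝ) 1 \ {1} := fun t ht =>
    ⟨⟨ht.1.le, ht.2.le⟩, ne_of_lt ht.2⟩
  have hne : (𝓝[Set.Icc (0:ℝ) 1 \ {1}] (1:ℝ)).NeBot := by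
    have h1 : (𝓝[Set.Ioo (0:ℝ) 1] (1:ℝ)).NeBot := by
      rw [← mem_closure_iff_nhdsWithin_neBot, closure_Ioo one_ne_zero.symm]
      exact ⟨zero_le_one, le_refl 1⟩
    exact h1.mono (nhdsWithin_mono 1 hsub)
  refine le_of_tendsto hd ?_
  filter_upwards [self_mem_nhdsWithin,
    nhdsWithin_le_nhds (eventually_gt_nhds ha1)] with t ht hat
  rcases ht with ⟨⟨ht0, ht1⟩, htne⟩
  have ht1' : t < 1 := lt_of_le_of_ne ht1 htne
  have key := L.strictConcaveOn.secant_strict_mono (a := (1:ℝ)) (x := a) (y := t)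
    (Set.mem_Ici.2 zero_le_one) (Set.mem_Ici.2 ha0) (Set.mem_Ici.2 ht0)
    (ne_of_lt ha1) htne hat
  -- key : (f t - f 1)/(t - 1) < (f a - f 1)/(a - 1)
  have : slope L.toFun 1 t ≤ (L.toFun a - L.toFun 1) / (a - 1) := by
    simpa [slope_def_field] using key.le
  have heq : (L.toFun a - L.toFun 1) / (a - 1) = (L.toFun 1 - L.toFun a) / (1 - a) := by
    rw [← neg_div_neg_eq]; ring_nf
  linarith [this, heq ▸ this]


lemma slope_le_ub {a b : ℝ} (ha : 0 ≤ a) (hab : a < b) (hb : b ≤ 1) :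
    (L.toFun b - L.toFun a) / (b - a) ≤ L.deriv 0 := by
  rcases eq_or_lt_of_le ha with rfl | ha'
  · exact ub_slope0 L hab hb
  · have hb0 : 0 < b := ha'.trans hab
    have key := L.strictConcaveOn.secant_strict_mono (a := b) (x := (0:ℝ)) (y := a)
      (Set.mem_Ici.2 hb0.le) Set.self_mem_Ici (Set.mem_Ici.2 ha)
      (ne_of_lt hb0) (ne_of_lt hab) ha'
    have h1 : (L.toFun a - L.toFun b) / (a - b) = (L.toFun b - L.toFun a) / (b - a) := by
      rw [← neg_div_neg_eq]; ring_nf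
    have h2 : (L.toFun 0 - L.toFun b) / (0 - b) = (L.toFun b - L.toFun 0) / (b - 0) := by
      rw [← neg_div_neg_eq]; ring_nf
    calc (L.toFun b - L.toFun a) / (b - a) = (L.toFun a - L.toFun b) / (a - b) := h1.symm
      _ ≤ (L.toFun 0 - L.toFun b) / (0 - b) := key.le
      _ = (L.toFun b - L.toFun 0) / (b - 0) := h2
      _ ≤ L.deriv 0 := ub_slope0 L hb0 hb

lemma slope_ge_lb {a b : ℝ} (ha : 0 ≤ a) (hab : a < b) (hb : b ≤ 1) :
    L.deriv 1 ≤ (L.toFun b - L.toFun a) / (b - a) := by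
  rcases eq_or_lt_of_le hb with rfl | hb'
  · exact lb_slope1 L ha hab
  · have hb0 : 0 ≤ b := ha.trans hab.le
    have key := L.strictConcaveOn.secant_strict_mono (a := b) (x := a) (y := (1:ℝ))
      (Set.mem_Ici.2 hb0) (Set.mem_Ici.2 ha) (Set.mem_Ici.2 zero_le_one)
      (ne_of_lt hab) (ne_of_gt hb') (lt_of_lt_of_le hab hb)
    have h1 : (L.toFun a - L.toFun b) / (a - b) = (L.toFun b - L.toFun a) / (b - a) := by
      rw [← neg_div_neg_eq]; ring_nf
    calc L.deriv 1 ≤ (L.toFun 1 - L.toFun b) / (1 - b) := lb_slope1 L hb0 hb'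
      _ ≤ (L.toFun a - L.toFun b) / (a - b) := key.le
      _ = (L.toFun b - L.toFun a) / (b - a) := h1

lemma lip (a b : ℝ) (ha : 0 ≤ a) (hab : a ≤ b) (hb : b ≤ 1) :
    L.toFun b - L.toFun a ≤ L.deriv 0 * (b - a) := by
  rcases eq_or_lt_of_le hab with rfl | h
  · simp
  · have := slope_le_ub L ha h hb
    rw [div_le_iff₀ (by linarith)] at this
    linarith

lemma lower (a b : ℝ) (ha : 0 ≤ a) (hab : a ≤ b) (hb : b ≤ 1) :
    L.deriv 1 * (b - a) ≤ L.toFun b - L.toFun a := by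
  rcases eq_or_lt_of_le hab with rfl | h
  · simp
  · have := slope_ge_lb L ha h hb
    rw [le_div_iff₀ (by linarith)] at this
    linarith

lemma one_le_ub : 1 ≤ L.deriv 0 := by
  have := lip L 0 1 le_rfl zero_le_one le_rfl
  rw [L.map_zero, L.map_one] at this; linarith

lemma lb_le_one : L.deriv 1 ≤ 1 := by
  have := lower L 0 1 le_rfl zero_le_one le_rfl
  rw [L.map_zero, L.map_one] at this; linarith

lemma f_le (s : ℝ) (hs : 0 ≤ s) : L.toFun s ≤ L.deriv 0 * s := by
  rcases eq_or_lt_of_le hs with rfl | hs'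
  · simp [L.map_zero]
  · rcases le_or_gt s 1 with h1 | h1
    · have := lip L 0 s le_rfl hs'.le h1
      rw [L.map_zero] at this; linarith
    · have key := L.strictConcaveOn.secant_strict_mono (a := (0:ℝ)) (x := (1:ℝ)) (y := s)
        Set.self_mem_Ici (Set.mem_Ici.2 zero_le_one) (Set.mem_Ici.2 hs)
        one_ne_zero (ne_of_gt hs') h1
      rw [L.map_zero, L.map_one] at key
      -- key : (f s - 0)/(s - 0) < (1 - 0)/(1 - 0)
      have h2 : L.toFun s / s < 1 := by simpa using key
      have h3 : L.toFun s < s := by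
        rw [div_lt_one hs'] at h2; exact h2
      nlinarith [one_le_ub L]

lemma abs_lip {a b : ℝ} (ha : 0 ≤ a) (ha1 : a ≤ 1) (hb : 0 ≤ b) (hb1 : b ≤ 1) :
    |L.toFun a - L.toFun b| ≤ L.deriv 0 * |a - b| := by
  rcases le_total a b with h | h
  · have hm : L.toFun a ≤ L.toFun b :=
      L.strictMonoOn.monotoneOn (Set.mem_Ici.2 ha) (Set.mem_Ici.2 hb) h
    rw [abs_sub_comm, abs_sub_comm a b, abs_of_nonneg (by linarith : (0:ℝ) ≤ b - a),
      abs_of_nonneg (by linarith : (0:ℝ) ≤ L.toFun b - L.toFun a)]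
    exact lip L a b ha h hb1
  · have hm : L.toFun b ≤ L.toFun a :=
      L.strictMonoOn.monotoneOn (Set.mem_Ici.2 hb) (Set.mem_Ici.2 ha) h
    rw [abs_of_nonneg (by linarith : (0:ℝ) ≤ a - b),
      abs_of_nonneg (by linarith : (0:ℝ) ≤ L.toFun a - L.toFun b)]
    exact lip L b a hb h ha1





def Sset {K : ℕ} (L : LearningFunction) (z : Fin K → ℝ) : Set ℝ :=
  {H : ℝ | 0 ≤ H ∧ ∑ k, L.toFun (H * z k) ≤ 1}
def Gv {K : ℕ} (L : LearningFunction) (z : Fin K → ℝ) : ℝ := sSup (Sset L z)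

variable {K : ℕ} {z : Fin K → ℝ}

lemma l1_eq (hz : ∀ k, 0 ≤ z k) : l1 z = ∑ k, z k :=
  Finset.sum_congr rfl fun k _ => abs_of_nonneg (hz k)

lemma l1_pos (hz : ∀ k, 0 ≤ z k) (hz0 : z ≠ 0) : 0 < l1 z := by
  obtain ⟨k, hk⟩ := Function.ne_iff.1 hz0
  have hk' : 0 < z k := lt_of_le_of_ne (hz k) (Ne.symm hk)
  rw [l1_eq hz]
  exact lt_of_lt_of_le hk' (Finset.single_le_sum (fun i _ => hz i) (Finset.mem_univ k))

lemma zero_mem : (0:ℝ) ∈ Sset L z := ⟨le_rfl, by simp [L.map_zero]⟩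

lemma mem_le_one (hz : ∀ k, 0 ≤ z k) {H : ℝ} (hH : H ∈ Sset L z) (k : Fin K) :
    H * z k ≤ 1 := by
  by_contra hgt
  push_neg at hgt
  have h1 : (1:ℝ) < L.toFun (H * z k) := by
    have := L.strictMonoOn (Set.mem_Ici.2 zero_le_one)
      (Set.mem_Ici.2 (mul_nonneg hH.1 (hz k))) hgt
    rwa [L.map_one] at this
  have h2 : L.toFun (H * z k) ≤ ∑ j, L.toFun (H * z j) :=
    Finset.single_le_sum (fun j _ => L.nonneg _ (mul_nonneg hH.1 (hz j)))
      (Finset.mem_univ k)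
  linarith [hH.2]

lemma bdd (hz : ∀ k, 0 ≤ z k) (hz0 : z ≠ 0) : BddAbove (Sset L z) := by
  obtain ⟨k, hk⟩ := Function.ne_iff.1 hz0
  have hk' : 0 < z k := lt_of_le_of_ne (hz k) (Ne.symm hk)
  exact ⟨1 / z k, fun H hH => (le_div_iff₀ hk').2 (mem_le_one L hz hH k)⟩

lemma sset_closed (hz : ∀ k, 0 ≤ z k) : IsClosed (Sset L z) := by
  have hcont : ContinuousOn (fun H : ℝ => ∑ k, L.toFun (H * z k)) (Set.Ici 0) := by
    apply continuousOn_finset_sum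
    intro k _
    apply L.continuousOn.comp ((continuous_id.mul continuous_const).continuousOn)
    intro H hH
    exact Set.mem_Ici.2 (mul_nonneg hH (hz k))
  have heq : Sset L z = Set.Ici 0 ∩ (fun H : ℝ => ∑ k, L.toFun (H * z k)) ⁻¹' (Set.Iic 1) := by
    ext H; simp [Sset, Set.mem_Ici, Set.mem_Iic, and_comm]
  rw [heq]
  exact hcont.preimage_isClosed_of_isClosed isClosed_Ici isClosed_Iic

lemma Gv_mem (hz : ∀ k, 0 ≤ z k) (hz0 : z ≠ 0) : Gv L z ∈ Sset L z :=
  (sset_closed L hz).csSup_mem ⟨0, zero_mem L⟩ (bdd L hz hz0)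

lemma inv_mem (hz : ∀ k, 0 ≤ z k) (hz0 : z ≠ 0) :
    1 / (L.deriv 0 * l1 z) ∈ Sset L z := by
  have hub : (0:ℝ) < L.deriv 0 := lt_of_lt_of_le one_pos (one_le_ub L)
  have hl1 := l1_pos hz hz0
  constructor
  · positivity
  · have h1 : ∀ k, L.toFun (1 / (L.deriv 0 * l1 z) * z k) ≤
        L.deriv 0 * (1 / (L.deriv 0 * l1 z) * z k) := fun k =>
      f_le L _ (mul_nonneg (by positivity) (hz k))
    calc ∑ k, L.toFun (1 / (L.deriv 0 * l1 z) * z k)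
        ≤ ∑ k, L.deriv 0 * (1 / (L.deriv 0 * l1 z) * z k) :=
          Finset.sum_le_sum fun k _ => h1 k
      _ = 1 := by
          rw [← Finset.mul_sum, ← Finset.mul_sum, ← l1_eq hz]
          field_simp

lemma Gv_ge (hz : ∀ k, 0 ≤ z k) (hz0 : z ≠ 0) :
    1 / (L.deriv 0 * l1 z) ≤ Gv L z :=
  le_csSup (bdd L hz hz0) (inv_mem L hz hz0)

lemma Gv_pos (hz : ∀ k, 0 ≤ z k) (hz0 : z ≠ 0) : 0 < Gv L z := by
  have hub : (0:ℝ) < L.deriv 0 := lt_of_lt_of_le one_pos (one_le_ub L)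
  have hl1 := l1_pos hz hz0
  have := Gv_ge L hz hz0
  have h0 : (0:ℝ) < 1 / (L.deriv 0 * l1 z) := by positivity
  linarith

lemma Hscale_eq (hz : ∀ k, 0 ≤ z k) (hz0 : z ≠ 0) :
    Hscale L (fun k => z k / l1 z) = l1 z * Gv L z := by
  have hl1 := l1_pos hz hz0
  apply IsGreatest.csSup_eq
  constructor
  · refine ⟨mul_nonneg hl1.le (Gv_pos L hz hz0).le, ?_⟩
    have harg : ∀ k, l1 z * Gv L z * (z k / l1 z) = Gv L z * z k := fun k => by
      field_simp
    calc ∑ k, L.toFun (l1 z * Gv L z * (z k / l1 z))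
        = ∑ k, L.toFun (Gv L z * z k) := by
          exact Finset.sum_congr rfl fun k _ => by rw [harg k]
      _ ≤ 1 := (Gv_mem L hz hz0).2
  · rintro H ⟨hH0, hH⟩
    have hmem : H / l1 z ∈ Sset L z := by
      refine ⟨div_nonneg hH0 hl1.le, ?_⟩
      have harg : ∀ k, H / l1 z * z k = H * (z k / l1 z) := fun k => by ring
      calc ∑ k, L.toFun (H / l1 z * z k)
          = ∑ k, L.toFun (H * (z k / l1 z)) :=
            Finset.sum_congr rfl fun k _ => by rw [harg k]
        _ ≤ 1 := hH
    have := le_csSup (bdd L hz hz0) hmem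
    rwa [div_le_iff₀ hl1, mul_comm] at this

lemma Gam_eq (hz : ∀ k, 0 ≤ z k) (hz0 : z ≠ 0) : Gam L z = 1 / Gv L z := by
  rw [Gam, if_neg hz0, lam, Hscale_eq L hz hz0]
  field_simp [(l1_pos hz hz0).ne', (Gv_pos L hz hz0).ne']

lemma Gam_le (hz : ∀ k, 0 ≤ z k) (hz0 : z ≠ 0) : Gam L z ≤ L.deriv 0 * l1 z := by
  have hub : (0:ℝ) < L.deriv 0 := lt_of_lt_of_le one_pos (one_le_ub L)
  have hl1 := l1_pos hz hz0
  rw [Gam_eq L hz hz0, div_le_iff₀ (Gv_pos L hz hz0)]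
  have := Gv_ge L hz hz0
  have h : L.deriv 0 * l1 z * (1 / (L.deriv 0 * l1 z)) = 1 := by field_simp
  have h2 := mul_le_mul_of_nonneg_left this (mul_pos hub hl1).le
  linarith

lemma Gam_nonneg (hz : ∀ k, 0 ≤ z k) : 0 ≤ Gam L z := by
  rcases eq_or_ne z 0 with rfl | hz0
  · simp [Gam]
  · rw [Gam_eq L hz hz0]
    exact (div_pos one_pos (Gv_pos L hz hz0)).le

lemma key_onesided (hz : ∀ k, 0 ≤ z k) {w : Fin K → ℝ} (hw : ∀ k, 0 ≤ w k)
    (hz0 : z ≠ 0) (hw0 : w ≠ 0) :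
    Gam L w ≤ Gam L z + (L.deriv 0 ^ 2 / L.deriv 1) * ∑ k, |z k - w k| := by
  set ub := L.deriv 0 with hub_def
  set lb := L.deriv 1 with hlb_def
  have hub1 : 1 ≤ ub := one_le_ub L
  have hub : 0 < ub := lt_of_lt_of_le one_pos hub1
  have hlb : 0 < lb := L.deriv_one_pos
  have hlb1 : lb ≤ 1 := lb_le_one L
  set c := ub ^ 2 / lb with hc_def
  have hc1 : 1 ≤ c := by rw [hc_def, le_div_iff₀ hlb]; nlinarith
  have hc0 : 0 < c := lt_of_lt_of_le one_pos hc1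
  set δ := ∑ k, |z k - w k| with hδ_def
  have hδ : 0 ≤ δ := Finset.sum_nonneg fun k _ => abs_nonneg _
  set H := Gv L z with hH_def
  have hH : 0 < H := Gv_pos L hz hz0
  have hHmem := Gv_mem L hz hz0
  have hHz : ∀ k, H * z k ≤ 1 := mem_le_one L hz hHmem
  have hprod : 0 ≤ c * δ * H := mul_nonneg (mul_nonneg hc0.le hδ) hH.le
  have hden : 0 < 1 + c * δ * H := by linarith
  set H' := H / (1 + c * δ * H) with hH'_def
  have hH' : 0 < H' := div_pos hH hden
  have hH'le : H' ≤ H := div_le_self hH.le (by linarith)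
  have hdiff : H - H' = c * δ * H * H' := by
    rw [hH'_def]; field_simp; ring
  have hcoord : ∀ k, |z k - w k| ≤ δ := by
    intro k
    rw [hδ_def]
    exact Finset.single_le_sum (f := fun i => |z i - w i|)
      (fun i _ => abs_nonneg _) (Finset.mem_univ k)
  have hH'w : ∀ k, H' * w k ≤ 1 := by
    intro k
    have h1 : w k ≤ z k + δ := by
      have h := (abs_le.1 (hcoord k)).1
      linarith
    have h2 : H' * w k ≤ H' * (z k + δ) := mul_le_mul_of_nonneg_left h1 hH'.le
    have h3 : H' * (z k + δ) ≤ 1 := by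
      rw [hH'_def, div_mul_eq_mul_div, div_le_one hden]
      nlinarith [hHz k, mul_nonneg (mul_nonneg hδ hH.le) (sub_nonneg.2 hc1)]
    linarith
  have hH'z1 : ∀ k, H' * z k ≤ 1 := fun k =>
    le_trans (mul_le_mul_of_nonneg_right hH'le (hz k)) (hHz k)
  have hmemw : H' ∈ Sset L w := by
    refine ⟨hH'.le, ?_⟩
    have step : ∀ k, L.toFun (H' * w k) ≤
        L.toFun (H * z k) - lb * (H - H') * z k + ub * H' * |z k - w k| := by
      intro k
      have hal := abs_lip L (a := H' * w k) (b := H' * z k)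
        (mul_nonneg hH'.le (hw k)) (hH'w k) (mul_nonneg hH'.le (hz k)) (hH'z1 k)
      have habs : |H' * w k - H' * z k| = H' * |z k - w k| := by
        rw [← mul_sub, abs_mul, abs_of_nonneg hH'.le, abs_sub_comm]
      rw [habs] at hal
      have h1 : L.toFun (H' * w k) - L.toFun (H' * z k) ≤ ub * (H' * |z k - w k|) :=
        (le_abs_self _).trans hal
      have hlow := lower L (H' * z k) (H * z k) (mul_nonneg hH'.le (hz k))
        (mul_le_mul_of_nonneg_right hH'le (hz k)) (hHz k)
      nlinarith [hlow, h1]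
    have hsum : ∑ k, L.toFun (H' * w k) ≤
        (∑ k, L.toFun (H * z k)) - lb * (H - H') * (∑ k, z k) + ub * H' * δ := by
      calc ∑ k, L.toFun (H' * w k)
          ≤ ∑ k, (L.toFun (H * z k) - lb * (H - H') * z k + ub * H' * |z k - w k|) :=
            Finset.sum_le_sum fun k _ => step k
        _ = (∑ k, L.toFun (H * z k)) - lb * (H - H') * (∑ k, z k) + ub * H' * δ := by
            rw [Finset.sum_add_distrib, Finset.sum_sub_distrib, ← Finset.mul_sum,
              ← Finset.mul_sum, hδ_def]
    have hSig : l1 z = ∑ k, z k := l1_eq hz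
    have hSigpos : 0 < ∑ k, z k := hSig ▸ l1_pos hz hz0
    have hHl1 : 1 / (ub * (∑ k, z k)) ≤ H := hSig ▸ Gv_ge L hz hz0
    have h1 : 1 ≤ ub * (∑ k, z k) * H := by
      have hm := mul_le_mul_of_nonneg_left hHl1 (by positivity : (0:ℝ) ≤ ub * ∑ k, z k)
      have he : ub * (∑ k, z k) * (1 / (ub * (∑ k, z k))) = 1 := by
        field_simp
      linarith [he ▸ hm]
    have hlc : lb * c = ub ^ 2 := by rw [hc_def]; field_simp
    have hfinal : ub * H' * δ ≤ lb * (H - H') * (∑ k, z k) := by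
      rw [hdiff]
      have expand : lb * (c * δ * H * H') * (∑ k, z k) =
          (lb * c) * δ * H' * ((∑ k, z k) * H) := by ring
      rw [expand, hlc]
      nlinarith [mul_nonneg (mul_nonneg hδ hH'.le) hub.le, h1,
        mul_le_mul_of_nonneg_left h1 (mul_nonneg (mul_nonneg hδ hH'.le) (by positivity : (0:ℝ) ≤ ub))]
    linarith [hHmem.2, hsum, hfinal]
  have hGw : H' ≤ Gv L w := le_csSup (bdd L hw hw0) hmemw
  have hGwpos := Gv_pos L hw hw0
  rw [Gam_eq L hw hw0, Gam_eq L hz hz0]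
  have h1 : 1 / Gv L w ≤ 1 / H' := one_div_le_one_div_of_le hH' hGw
  have h2 : 1 / H' = 1 / H + c * δ := by
    rw [hH'_def]
    field_simp
  linarith




lemma LGam_pos : 0 < LGam L := by
  have hub : 0 < L.deriv 0 := lt_of_lt_of_le one_pos (one_le_ub L)
  have hlb : 0 < L.deriv 1 := L.deriv_one_pos
  have : 0 < 2 * L.deriv 0 ^ 3 / L.deriv 1 := by positivity
  rw [LGam]; linarith

lemma ub_le_LGam : L.deriv 0 ≤ LGam L := by
  have hub : 0 < L.deriv 0 := lt_of_lt_of_le one_pos (one_le_ub L)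
  have hlb : 0 < L.deriv 1 := L.deriv_one_pos
  have : 0 ≤ 2 * L.deriv 0 ^ 3 / L.deriv 1 := by positivity
  rw [LGam]; linarith

lemma c_le_LGam : L.deriv 0 ^ 2 / L.deriv 1 ≤ LGam L := by
  have hub1 : 1 ≤ L.deriv 0 := one_le_ub L
  have hub : 0 < L.deriv 0 := lt_of_lt_of_le one_pos hub1
  have hlb : 0 < L.deriv 1 := L.deriv_one_pos
  rw [LGam, div_le_iff₀ hlb, add_mul, div_mul_cancel₀ _ hlb.ne']
  nlinarith

lemma Gam_lipschitz (hz : ∀ k, 0 ≤ z k) {w : Fin K → ℝ} (hw : ∀ k, 0 ≤ w k) :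
    |Gam L z - Gam L w| ≤ LGam L * ∑ k, |z k - w k| := by
  have hδ : 0 ≤ ∑ k, |z k - w k| := Finset.sum_nonneg fun k _ => abs_nonneg _
  rcases eq_or_ne z 0 with rfl | hz0 <;> rcases eq_or_ne w 0 with rfl | hw0
  · simp [Gam]
  · rw [show Gam L (0 : Fin K → ℝ) = 0 from if_pos rfl, zero_sub, abs_neg,
      abs_of_nonneg (Gam_nonneg L hw)]
    have h1 : Gam L w ≤ L.deriv 0 * l1 w := Gam_le L hw hw0
    have h2 : l1 w = ∑ k, |(0 : Fin K → ℝ) k - w k| := by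
      rw [l1]
      exact Finset.sum_congr rfl fun k _ => by simp
    rw [h2] at h1
    have := mul_le_mul_of_nonneg_right (ub_le_LGam L) hδ
    linarith
  · rw [show Gam L (0 : Fin K → ℝ) = 0 from if_pos rfl, sub_zero,
      abs_of_nonneg (Gam_nonneg L hz)]
    have h1 : Gam L z ≤ L.deriv 0 * l1 z := Gam_le L hz hz0
    have h2 : l1 z = ∑ k, |z k - (0 : Fin K → ℝ) k| := by
      rw [l1]
      exact Finset.sum_congr rfl fun k _ => by simp
    rw [h2] at h1
    have := mul_le_mul_of_nonneg_right (ub_le_LGam L) hδ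
    linarith
  · have h1 := key_onesided L hz hw hz0 hw0
    have h2 := key_onesided L hw hz hw0 hz0
    have hsym : ∑ k, |w k - z k| = ∑ k, |z k - w k| :=
      Finset.sum_congr rfl fun k _ => abs_sub_comm _ _
    rw [hsym] at h2
    have hc := mul_le_mul_of_nonneg_right (c_le_LGam L) hδ
    rw [abs_sub_le_iff]
    constructor <;> linarith

lemma coord_le_one {x : Fin K → ℝ} (hx : x ∈ simplex K) (k : Fin K) : x k ≤ 1 := by
  rcases hx with ⟨hnn, hsum⟩
  calc x k ≤ ∑ j, x j := Finset.single_le_sum (fun j _ => hnn j) (Finset.mem_univ k)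
    _ = 1 := hsum

lemma bundle_nonneg {x : Fin K → ℝ} (hx : x ∈ simplex K) (k : Fin K) :
    0 ≤ x k * (1 - x k) :=
  mul_nonneg (hx.1 k) (by linarith [coord_le_one hx k])

lemma bundle_diff {x y : Fin K → ℝ} (hx : x ∈ simplex K) (hy : y ∈ simplex K) :
    ∑ k, |x k * (1 - x k) - y k * (1 - y k)| ≤ l1 (x - y) := by
  rw [l1]
  apply Finset.sum_le_sum
  intro k _
  have he : x k * (1 - x k) - y k * (1 - y k) = (x k - y k) * (1 - (x k + y k)) := by ring
  have h1 : |1 - (x k + y k)| ≤ 1 := by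
    rw [abs_le]
    constructor
    · linarith [coord_le_one hx k, coord_le_one hy k]
    · linarith [hx.1 k, hy.1 k]
  calc |x k * (1 - x k) - y k * (1 - y k)| = |x k - y k| * |1 - (x k + y k)| := by
        rw [he, abs_mul]
    _ ≤ |x k - y k| * 1 := mul_le_mul_of_nonneg_left h1 (abs_nonneg _)
    _ = |(x - y) k| := by simp

lemma main_lip {x y : Fin K → ℝ} (hx : x ∈ simplex K) (hy : y ∈ simplex K) :
    |Gam L (fun k => x k * (1 - x k)) - Gam L (fun k => y k * (1 - y k))| ≤
      LGam L * l1 (x - y) := by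
  have h1 := Gam_lipschitz L (z := fun k => x k * (1 - x k))
    (bundle_nonneg hx) (w := fun k => y k * (1 - y k)) (bundle_nonneg hy)
  have h2 := bundle_diff hx hy
  have h3 := mul_le_mul_of_nonneg_left h2 (LGam_pos L).le
  exact h1.trans h3

lemma l1_eq_cov {x q : Fin K → ℝ} (hx : x ∈ simplex K) (hq : q ∈ simplex K) :
    l1 (x - q) = 2 * (1 - Cov x q) := by
  have habs : ∀ a b : ℝ, |a - b| = a + b - 2 * min a b := by
    intro a b
    rcases le_total a b with h | h
    · rw [abs_of_nonpos (by linarith), min_eq_left h]; ring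
    · rw [abs_of_nonneg (by linarith), min_eq_right h]; ring
  have : l1 (x - q) = ∑ k, (x k + q k - 2 * min (x k) (q k)) := by
    rw [l1]
    exact Finset.sum_congr rfl fun k _ => by rw [Pi.sub_apply, habs]
  rw [this, Finset.sum_sub_distrib, Finset.sum_add_distrib, ← Finset.mul_sum,
    hx.2, hq.2, Cov]
  ring

end GamLipAux

/-- Lipschitz control of the reduced-form coordination term:
x ↦ Γ(x⊙(1-x)) is L_Γ-Lipschitz on the simplex in the ℓ¹-norm; consequently
|Γ(x⊙(1-x)) - Γ(q⊙(1-q))| ≤ 2 L_Γ (1 - C(x,q)). -/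
theorem Gam_reduced_form_lipschitz {K : ℕ} (L : LearningFunction)
    (x y q : Fin K → ℝ)
    (hx : x ∈ simplex K) (hy : y ∈ simplex K) (hq : q ∈ simplex K) :
    |Gam L (fun k => x k * (1 - x k)) - Gam L (fun k => y k * (1 - y k))| ≤
      LGam L * l1 (x - y) ∧
    |Gam L (fun k => x k * (1 - x k)) - Gam L (fun k => q k * (1 - q k))| ≤
      2 * LGam L * (1 - Cov x q) := by
  refine ⟨GamLipAux.main_lip L hx hy, ?_⟩
  calc |Gam L (fun k => x k * (1 - x k)) - Gam L (fun k => q k * (1 - q k))|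
      ≤ LGam L * l1 (x - q) := GamLipAux.main_lip L hx hq
    _ = LGam L * (2 * (1 - Cov x q)) := by rw [GamLipAux.l1_eq_cov hx hq]
    _ = 2 * LGam L * (1 - Cov x q) := by ring

end
end

section
/- Let K ≥ 3, let u be in the simplex Δ^{K−1} with all coordinates strictly positive, and let h ∈ Δ^{K−1} satisfy h_k ≤ 1/2 for every k. Then C(h,u) ≥ u_(1) + u_(2), where u_(1) ≤ u_(2) ≤ ⋯ ≤ u_(K) are the coordinates of u arranged in increasing order. -/
open Finset

noncomputable section

/-- If K ≥ 3, u is interior in the simplex, and h ∈ Δ^{K-1} has all coordinates ≤ 1/2,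
then C(h,u) ≥ u_(1) + u_(2), the sum of the two smallest coordinates of u. -/
theorem coverage_ge_two_smallest {K : ℕ} (hK : 3 ≤ K)
    (u : Fin K → ℝ) (hu : u ∈ simplex K) (hupos : ∀ k, 0 < u k)
    (h : Fin K → ℝ) (hh : h ∈ simplex K) (hhalf : ∀ k, h k ≤ 1 / 2) :
    u (Tuple.sort u ⟨0, by omega⟩) + u (Tuple.sort u ⟨1, by omega⟩) ≤ Cov h u := by
  obtain ⟨hu0, hu1⟩ := hu
  obtain ⟨hh0, hh1⟩ := hh
  set σ := Tuple.sort u with hσdef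
  have hmono : Monotone (u ∘ σ) := Tuple.monotone_sort u
  have i0 : Fin K := ⟨0, by omega⟩
  have pairsum : ∀ a b : Fin K, a ≠ b → ∀ (v : Fin K → ℝ), (∀ k, 0 ≤ v k) →
      v a + v b ≤ ∑ k, v k := by
    intro a b hab v hv
    rw [← Finset.sum_pair hab]
    exact Finset.sum_le_sum_of_subset_of_nonneg (Finset.subset_univ _) (fun i _ _ => hv i)
  have hmin0 : ∀ k, u (σ ⟨0, by omega⟩) ≤ u k := by
    intro k
    have := hmono (a := ⟨0, by omega⟩) (b := σ.symm k) (by simp [Fin.le_def])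
    simpa using this
  have hmin1 : ∀ k, k ≠ σ ⟨0, by omega⟩ → u (σ ⟨1, by omega⟩) ≤ u k := by
    intro k hk
    have h2 : (σ.symm k).1 ≠ 0 := by
      intro hc
      apply hk
      have : σ.symm k = ⟨0, by omega⟩ := Fin.ext hc
      rw [← this]; simp
    have hle : (⟨1, by omega⟩ : Fin K) ≤ σ.symm k := by
      rw [Fin.le_def]; simpa using Nat.one_le_iff_ne_zero.mpr h2
    have := hmono hle
    simpa using this
  have hne01 : σ ⟨0, by omega⟩ ≠ σ ⟨1, by omega⟩ := by
    simp [Fin.ext_iff]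
  have hne12 : σ ⟨1, by omega⟩ ≠ σ ⟨2, by omega⟩ := by
    simp [Fin.ext_iff]
  have h12 : u (σ ⟨1, by omega⟩) ≤ u (σ ⟨2, by omega⟩) :=
    hmono (a := ⟨1, by omega⟩) (b := ⟨2, by omega⟩) (by simp [Fin.le_def])
  have hps : u (σ ⟨1, by omega⟩) + u (σ ⟨2, by omega⟩) ≤ 1 := by
    rw [← hu1]; exact pairsum _ _ hne12 u hu0
  have hhalfu : u (σ ⟨1, by omega⟩) ≤ 1 / 2 := by linarith
  have hminnn : ∀ k, 0 ≤ min (h k) (u k) := fun k => le_min (hh0 k) (hu0 k)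
  by_cases hA : ∃ a b : Fin K, a ≠ b ∧ u a ≤ h a ∧ u b ≤ h b
  · obtain ⟨a, b, hab, ha, hb⟩ := hA
    have key : u (σ ⟨0, by omega⟩) + u (σ ⟨1, by omega⟩) ≤ u a + u b := by
      by_cases ha0 : a = σ ⟨0, by omega⟩
      · have : u (σ ⟨1, by omega⟩) ≤ u b := hmin1 b (by rw [← ha0]; exact hab.symm)
        rw [ha0]; linarith
      · by_cases hb0 : b = σ ⟨0, by omega⟩
        · have : u (σ ⟨1, by omega⟩) ≤ u a := hmin1 a ha0
          rw [hb0]; linarith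
        · linarith [hmin0 a, hmin1 b hb0]
    have hcov : u a + u b ≤ Cov h u := by
      have : u a + u b = min (h a) (u a) + min (h b) (u b) := by
        rw [min_eq_right ha, min_eq_right hb]
      rw [this, Cov]
      exact pairsum a b hab _ hminnn
    linarith
  · by_cases hB : ∃ a, u a ≤ h a
    · obtain ⟨a, ha⟩ := hB
      have hk : ∀ k, k ≠ a → h k < u k := by
        intro k hk
        by_contra hc
        push_neg at hc
        exact hA ⟨k, a, hk, hc, ha⟩
      have hC : Cov h u = (∑ k ∈ Finset.univ.erase a, h k) + u a := by
        rw [Cov, ← Finset.sum_erase_add _ _ (Finset.mem_univ a)]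
        congr 1
        · exact Finset.sum_congr rfl fun k hk' =>
            min_eq_left (hk k (Finset.ne_of_mem_erase hk')).le
        · exact min_eq_right ha
      have hsum : ∑ k ∈ Finset.univ.erase a, h k = 1 - h a := by
        rw [Finset.sum_erase_eq_sub (Finset.mem_univ a), hh1]
      have := hhalf a
      linarith [hmin0 a]
    · push_neg at hB
      have hC : Cov h u = ∑ k, h k :=
        Finset.sum_congr rfl fun k _ => min_eq_left (hB k).le
      have hpair : u (σ ⟨0, by omega⟩) + u (σ ⟨1, by omega⟩) ≤ 1 := by
        rw [← hu1]; exact pairsum _ _ hne01 u hu0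
      rw [Cov] at *
      linarith [hC.symm ▸ hh1]

end
end
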